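/- First-order stochastic dominance of the observation marginals in the action (lemma used in the proofs of Theorems 1 and 2): Let P(1), P(2) be X×X row-stochastic matrices with strictly positive entries satisfying copositive dominance P(1) ⪯ P(2), and let B(1), B(2) be X×Y row-stochastic matrices such that B(1) is TP2 and (A5) holds: Σ_{y≥j} B(1)_{i,y} ≤ Σ_{y≥j} B(2)_{i,y} for all i ∈ {1,...,X} and j ∈ {1,...,Y}. Then for every belief π ∈ Π(X), the observation marginals σ_a(π,y) = Σ_i B(a)_{i,y}(P(a)ᵀπ)_i (a ∈ {1,2}) satisfy first-order stochastic dominance: Σ_{y≥l} σ_1(π,y) ≤ Σ_{y≥l} σ_2(π,y) for every l ∈ {1,...,Y}. -/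

import Mathlib

open Finset

/-- Membership in the belief simplex Π(X). -/
def inSimplex {X : ℕ} (π : Fin X → ℝ) : Prop :=
  (∀ i, 0 ≤ π i) ∧ ∑ i, π i = 1

/-- A matrix is row-stochastic: nonnegative entries, rows summing to one. -/
def rowStochastic {n m : ℕ} (A : Matrix (Fin n) (Fin m) ℝ) : Prop :=
  (∀ i j, 0 ≤ A i j) ∧ ∀ i, ∑ j, A i j = 1

/-- Totally positive of order 2: all 2×2 minors nonnegative. -/
def TP2 {n m : ℕ} (A : Matrix (Fin n) (Fin m) ℝ) : Prop :=
  ∀ i i' : Fin n, ∀ y y' : Fin m, i < i' → y < y' →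
    A i y' * A i' y ≤ A i y * A i' y'

/-- Monotone likelihood ratio (MLR) order: `a ≤_r b`. -/
def MLRle {n : ℕ} (a b : Fin n → ℝ) : Prop :=
  ∀ i j : Fin n, i < j → a j * b i ≤ a i * b j

/-- The last index of `Fin n`. -/
def lastIdx (n : ℕ) [NeZero n] : Fin n :=
  ⟨n - 1, Nat.sub_lt (Nat.pos_of_ne_zero (NeZero.ne n)) Nat.one_pos⟩

/-- One-step predicted belief `Pᵀπ`. -/
noncomputable def bayesPred {X : ℕ} (P : Matrix (Fin X) (Fin X) ℝ) (π : Fin X → ℝ) : Fin X → ℝ :=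
  fun j => ∑ i, P i j * π i

/-- Normalization constant σ(π,y) = Σ_j B_{j,y} (Pᵀπ)_j. -/
noncomputable def obsMarg {X Y : ℕ} (B : Matrix (Fin X) (Fin Y) ℝ)
    (P : Matrix (Fin X) (Fin X) ℝ) (π : Fin X → ℝ) (y : Fin Y) : ℝ :=
  ∑ j, B j y * bayesPred P π j

/-- Bayes belief update T(π,y). -/
noncomputable def bayesT {X Y : ℕ} (B : Matrix (Fin X) (Fin Y) ℝ)
    (P : Matrix (Fin X) (Fin X) ℝ) (π : Fin X → ℝ) (y : Fin Y) : Fin X → ℝ :=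
  fun j => B j y * bayesPred P π j / obsMarg B P π y

/-- Value iteration: `V 0 ≡ 0`, `V (k+1) π = max_u [rᵤᵀπ + ρ Σ_y V k (T(π,y,u)) σ(π,y,u)]`. -/
noncomputable def VI {X Y U : ℕ} [NeZero U]
    (P : Fin U → Matrix (Fin X) (Fin X) ℝ)
    (B : Fin U → Matrix (Fin X) (Fin Y) ℝ)
    (r : Fin U → Fin X → ℝ) (ρ : ℝ) : ℕ → (Fin X → ℝ) → ℝ
  | 0 => fun _ => 0
  | (k+1) => fun π =>
      Finset.univ.sup' Finset.univ_nonempty fun u =>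
        (∑ i, r u i * π i) +
          ρ * ∑ y, VI P B r ρ k (bayesT (B u) (P u) π y) * obsMarg (B u) (P u) π y

/-- `Qfun P B r ρ k π u` is the value-iteration Q-function at horizon `k+1`,
i.e. `Q_{k+1}(π,u) = rᵤᵀπ + ρ Σ_y V_k(T(π,y,u)) σ(π,y,u)`. -/
noncomputable def Qfun {X Y U : ℕ} [NeZero U]
    (P : Fin U → Matrix (Fin X) (Fin X) ℝ)
    (B : Fin U → Matrix (Fin X) (Fin Y) ℝ)
    (r : Fin U → Fin X → ℝ) (ρ : ℝ) (k : ℕ) (π : Fin X → ℝ) (u : Fin U) : ℝ :=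
  (∑ i, r u i * π i) +
    ρ * ∑ y, VI P B r ρ k (bayesT (B u) (P u) π y) * obsMarg (B u) (P u) π y

/-- Lehmann precision of the pair `(A, C)` (i.e. `C >_L A`): for all columns `j, l`,
`g(i) = Σ_{y≤j} A i y − Σ_{y≤l} C i y` changes sign at most once,
from negative to positive, as the row `i` increases. -/
def LehmannPrec {X Y : ℕ} (A C : Matrix (Fin X) (Fin Y) ℝ) : Prop :=
  ∀ j l : Fin Y, ∀ i i' : Fin X, i ≤ i' →
    ((0 ≤ (∑ y ∈ univ.filter (· ≤ j), A i y) - ∑ y ∈ univ.filter (· ≤ l), C i y →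
      0 ≤ (∑ y ∈ univ.filter (· ≤ j), A i' y) - ∑ y ∈ univ.filter (· ≤ l), C i' y) ∧
     (0 < (∑ y ∈ univ.filter (· ≤ j), A i y) - ∑ y ∈ univ.filter (· ≤ l), C i y →
      0 < (∑ y ∈ univ.filter (· ≤ j), A i' y) - ∑ y ∈ univ.filter (· ≤ l), C i' y))

/-- Boundary/absolute-continuity condition (A7) for the pair `(A, C)` (C playing the role of
`B(u+1)`): `A_{i,1} C_{X,1} ≤ C_{i,1} A_{X,1}` and `A_{i,Y} C_{X,Y} ≥ C_{i,Y} A_{X,Y}`. -/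
def BoundaryCond {X Y : ℕ} [NeZero X] [NeZero Y] (A C : Matrix (Fin X) (Fin Y) ℝ) : Prop :=
  ∀ i : Fin X,
    A i 0 * C (lastIdx X) 0 ≤ C i 0 * A (lastIdx X) 0 ∧
    C i (lastIdx Y) * A (lastIdx X) (lastIdx Y) ≤ A i (lastIdx Y) * C (lastIdx X) (lastIdx Y)

/-- Copositive dominance `P1 ⪯ P2`. -/
def CopositiveDom {X : ℕ} (P1 P2 : Matrix (Fin X) (Fin X) ℝ) : Prop :=
  ∀ j j' : Fin X, j'.val = j.val + 1 → ∀ π : Fin X → ℝ, inSimplex π →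
    0 ≤ ∑ m, ∑ n, π m *
      ((1/2) * ((P1 m j * P2 n j' - P1 m j' * P2 n j) +
                (P1 n j * P2 m j' - P1 n j' * P2 m j))) * π n

/-- `u` is the largest maximizer of `f` over the action set. -/
def isLargestArgmax {U : ℕ} (f : Fin U → ℝ) (u : Fin U) : Prop :=
  (∀ v, f v ≤ f u) ∧ ∀ v, f u ≤ f v → v ≤ u

/-! Copositive dominance at a belief `π` says precisely that consecutive entries of `P1ᵀπ` and
`P2ᵀπ` are in likelihood ratio order; since `P1ᵀπ` is positive, these comparisons chain into the
full likelihood ratio order `P1ᵀπ ≤_r P2ᵀπ`. Likelihood ratio order between vectors of equal mass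
raises the mean of every increasing function (a Chebyshev-type sum inequality), and by TP2 the tail
`∑_{y ≥ l} B1_{i,y}` is increasing in `i`. So the tail of `σ₁` is at most
`∑_i (∑_{y ≥ l} B1_{i,y}) (P2ᵀπ)_i`, which A5 bounds by the tail of `σ₂`. -/

theorem Finset.sum_sum_add_swap {ι R : Type*} [NonAssocSemiring R] (s : Finset ι)
    (g : ι → ι → R) :
    ∑ i ∈ s, ∑ j ∈ s, (g i j + g j i) = 2 * ∑ i ∈ s, ∑ j ∈ s, g i j := by
  simp only [sum_add_distrib]
  rw [sum_comm (f := fun i j => g j i), two_mul]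

theorem Fin.monotone_of_le_of_val_eq_succ {n : ℕ} {α : Type*} [Preorder α] {f : Fin n → α}
    (h : ∀ i j : Fin n, j.val = i.val + 1 → f i ≤ f j) : Monotone f := by
  cases n with
  | zero => exact fun i => i.elim0
  | succ n => exact Fin.monotone_iff_le_succ.2 fun i => h _ _ (by simp)

namespace MLRle

variable {n : ℕ} {a b : Fin n → ℝ}

/-- Twice the difference of the two sides is `∑ i, ∑ j, (a i * b j - a j * b i) * (f j - f i)`,
a sum of nonnegative terms. -/
theorem sum_mul_sum_le (hab : MLRle a b) {f : Fin n → ℝ} (hf : Monotone f) :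
    (∑ i, b i) * ∑ i, f i * a i ≤ (∑ i, a i) * ∑ i, f i * b i := by
  have hterm : ∀ i j, 0 ≤ (a i * b j - a j * b i) * (f j - f i) := by
    intro i j
    rcases lt_trichotomy i j with hij | rfl | hji
    · exact mul_nonneg (by linarith [hab i j hij]) (sub_nonneg.2 (hf hij.le))
    · simp
    · exact mul_nonneg_of_nonpos_of_nonpos (by linarith [hab j i hji])
        (sub_nonpos.2 (hf hji.le))
  set g : Fin n → Fin n → ℝ := fun i j => a i * (f j * b j) - b i * (f j * a j)
  have hdouble : ∑ i, ∑ j, (a i * b j - a j * b i) * (f j - f i) =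
      2 * ((∑ i, a i) * ∑ i, f i * b i - (∑ i, b i) * ∑ i, f i * a i) :=
    calc _ = ∑ i, ∑ j, (g i j + g j i) :=
          sum_congr rfl fun i _ => sum_congr rfl fun j _ => by simp only [g]; ring
      _ = 2 * ∑ i, ∑ j, g i j := sum_sum_add_swap _ _
      _ = _ := by simp only [g, sum_sub_distrib, sum_mul_sum]
  linarith [sum_nonneg fun i (_ : i ∈ univ) => sum_nonneg fun j (_ : j ∈ univ) => hterm i j]

theorem sum_mul_le_sum_mul (hab : MLRle a b) {f : Fin n → ℝ} (hf : Monotone f)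
    (hsum : ∑ i, a i = ∑ i, b i) (hpos : 0 < ∑ i, a i) :
    ∑ i, f i * a i ≤ ∑ i, f i * b i := by
  have h := hab.sum_mul_sum_le hf
  rw [← hsum] at h
  exact le_of_mul_le_mul_left h hpos

theorem sum_filter_le_sum_filter (hab : MLRle a b) (hsum : ∑ i, a i = ∑ i, b i)
    (hpos : 0 < ∑ i, a i) (l : Fin n) :
    ∑ i ∈ univ.filter (l ≤ ·), a i ≤ ∑ i ∈ univ.filter (l ≤ ·), b i := by
  have hind : Monotone fun i : Fin n => if l ≤ i then (1 : ℝ) else 0 := by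
    intro i j hij
    by_cases hi : l ≤ i
    · simp [hi, hi.trans hij]
    · simp only [hi, if_false]
      split_ifs <;> norm_num
  simpa only [sum_filter, ite_mul, one_mul, zero_mul] using
    hab.sum_mul_le_sum_mul hind hsum hpos

end MLRle

theorem mlrLe_of_monotone_div {n : ℕ} {a b : Fin n → ℝ} (ha : ∀ i, 0 < a i)
    (hmono : Monotone fun i => b i / a i) : MLRle a b := by
  intro i j hij
  have h := hmono hij.le
  rw [div_le_div_iff₀ (ha i) (ha j)] at h
  linarith

theorem TP2.monotone_sum_filter {X Y : ℕ} {B : Matrix (Fin X) (Fin Y) ℝ} (hB : TP2 B)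
    (hrow : ∀ i, ∑ y, B i y = 1) (l : Fin Y) :
    Monotone fun i => ∑ y ∈ univ.filter (l ≤ ·), B i y :=
  monotone_iff_forall_lt.2 fun i i' hii' =>
    MLRle.sum_filter_le_sum_filter (fun y y' hyy' => hB i i' y y' hii' hyy')
      (by rw [hrow, hrow]) (by rw [hrow]; exact one_pos) l

section Belief

variable {X : ℕ} (P : Matrix (Fin X) (Fin X) ℝ) (π : Fin X → ℝ)

theorem sum_bayesPred (hP : ∀ i, ∑ j, P i j = 1) (hπ : ∑ i, π i = 1) :
    ∑ j, bayesPred P π j = 1 := by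
  simp only [bayesPred]
  rw [sum_comm]
  simp [← sum_mul, hP, hπ]

theorem bayesPred_nonneg (hP : ∀ i j, 0 ≤ P i j) (hπ : ∀ i, 0 ≤ π i) (j : Fin X) :
    0 ≤ bayesPred P π j :=
  sum_nonneg fun i _ => mul_nonneg (hP i j) (hπ i)

theorem bayesPred_pos (hP : ∀ i j, 0 < P i j) (hπ : inSimplex π) (j : Fin X) :
    0 < bayesPred P π j := by
  obtain ⟨i, -, hi⟩ := exists_lt_of_sum_lt (f := 0) (g := π) (s := univ) (by simp [hπ.2])
  exact sum_pos' (fun k _ => mul_nonneg (hP k j).le (hπ.1 k))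
    ⟨i, mem_univ i, mul_pos (hP i j) hi⟩

theorem sum_filter_obsMarg {Y : ℕ} (B : Matrix (Fin X) (Fin Y) ℝ) (l : Fin Y) :
    ∑ y ∈ univ.filter (l ≤ ·), obsMarg B P π y =
      ∑ j, (∑ y ∈ univ.filter (l ≤ ·), B j y) * bayesPred P π j := by
  simp only [obsMarg, sum_mul]
  exact sum_comm

end Belief

theorem copositiveDom_form_eq {X : ℕ} (P1 P2 : Matrix (Fin X) (Fin X) ℝ) (π : Fin X → ℝ)
    (j j' : Fin X) :
    ∑ m, ∑ n, π m * ((1/2) * ((P1 m j * P2 n j' - P1 m j' * P2 n j) +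
        (P1 n j * P2 m j' - P1 n j' * P2 m j))) * π n =
      bayesPred P1 π j * bayesPred P2 π j' - bayesPred P1 π j' * bayesPred P2 π j := by
  set g : Fin X → Fin X → ℝ := fun m n =>
    P1 m j * π m * (P2 n j' * π n) - P1 m j' * π m * (P2 n j * π n)
  calc _ = (1/2) * ∑ m, ∑ n, (g m n + g n m) := by
        simp only [mul_sum]
        exact sum_congr rfl fun m _ => sum_congr rfl fun n _ => by simp only [g]; ring
    _ = ∑ m, ∑ n, g m n := by rw [sum_sum_add_swap]; ring
    _ = _ := by simp only [g, bayesPred, sum_sub_distrib, sum_mul_sum]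

theorem CopositiveDom.mlrLe_bayesPred {X : ℕ} {P1 P2 : Matrix (Fin X) (Fin X) ℝ}
    (hcop : CopositiveDom P1 P2) (hP1 : ∀ i j, 0 < P1 i j) {π : Fin X → ℝ} (hπ : inSimplex π) :
    MLRle (bayesPred P1 π) (bayesPred P2 π) := by
  have hq := bayesPred_pos P1 π hP1 hπ
  refine mlrLe_of_monotone_div hq (Fin.monotone_of_le_of_val_eq_succ fun j j' hjj' => ?_)
  have h := hcop j j' hjj' π hπ
  rw [copositiveDom_form_eq] at h
  rw [div_le_div_iff₀ (hq j) (hq j')]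
  linarith

theorem obs_marginal_stochastic_dominance_general
    (X Y : ℕ)
    (P1 P2 : Matrix (Fin X) (Fin X) ℝ)
    (hP1 : rowStochastic P1) (hP2 : rowStochastic P2)
    (hP1pos : ∀ i j, 0 < P1 i j)
    (hcop : CopositiveDom P1 P2)
    (B1 B2 : Matrix (Fin X) (Fin Y) ℝ)
    (hB1 : rowStochastic B1)
    (hB1TP2 : TP2 B1)
    (hA5 : ∀ i : Fin X, ∀ j : Fin Y,
      ∑ y ∈ Finset.univ.filter (j ≤ ·), B1 i y ≤ ∑ y ∈ Finset.univ.filter (j ≤ ·), B2 i y) :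
    ∀ π : Fin X → ℝ, inSimplex π → ∀ l : Fin Y,
      ∑ y ∈ Finset.univ.filter (l ≤ ·), obsMarg B1 P1 π y ≤
        ∑ y ∈ Finset.univ.filter (l ≤ ·), obsMarg B2 P2 π y := by
  intro π hπ l
  rw [sum_filter_obsMarg, sum_filter_obsMarg]
  have hsum₁ := sum_bayesPred P1 π hP1.2 hπ.2
  calc ∑ j, (∑ y ∈ univ.filter (l ≤ ·), B1 j y) * bayesPred P1 π j
      ≤ ∑ j, (∑ y ∈ univ.filter (l ≤ ·), B1 j y) * bayesPred P2 π j :=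
        (hcop.mlrLe_bayesPred hP1pos hπ).sum_mul_le_sum_mul
          (hB1TP2.monotone_sum_filter hB1.2 l)
          (by rw [hsum₁, sum_bayesPred P2 π hP2.2 hπ.2]) (by rw [hsum₁]; exact one_pos)
    _ ≤ ∑ j, (∑ y ∈ univ.filter (l ≤ ·), B2 j y) * bayesPred P2 π j :=
        sum_le_sum fun j _ =>
          mul_le_mul_of_nonneg_right (hA5 j l) (bayesPred_nonneg P2 π hP2.1 hπ.1 j)

/-- First-order stochastic dominance of the observation marginals in the action:
under copositive dominance `P(1) ⪯ P(2)`, TP2 of `B(1)` and the row dominance condition A5,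
`σ₁(π,·) ≤_s σ₂(π,·)` for every belief `π`. -/
theorem obs_marginal_stochastic_dominance
    (X Y : ℕ)
    (P1 P2 : Matrix (Fin X) (Fin X) ℝ)
    (hP1 : rowStochastic P1) (hP2 : rowStochastic P2)
    (hP1pos : ∀ i j, 0 < P1 i j) (hP2pos : ∀ i j, 0 < P2 i j)
    (hcop : CopositiveDom P1 P2)
    (B1 B2 : Matrix (Fin X) (Fin Y) ℝ)
    (hB1 : rowStochastic B1) (hB2 : rowStochastic B2)
    (hB1TP2 : TP2 B1)
    (hA5 : ∀ i : Fin X, ∀ j : Fin Y,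
      ∑ y ∈ Finset.univ.filter (j ≤ ·), B1 i y ≤ ∑ y ∈ Finset.univ.filter (j ≤ ·), B2 i y) :
    ∀ π : Fin X → ℝ, inSimplex π → ∀ l : Fin Y,
      ∑ y ∈ Finset.univ.filter (l ≤ ·), obsMarg B1 P1 π y ≤
        ∑ y ∈ Finset.univ.filter (l ≤ ·), obsMarg B2 P2 π y :=
  obs_marginal_stochastic_dominance_general X Y P1 P2 hP1 hP2 hP1pos hcop B1 B2 hB1 hB1TP2 hA5
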